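/- Let Σ be a finite linearly ordered alphabet and let ℓ ≥ 1 be an integer. For every position j ∈ [1,ℓ], the number of primitive strings X ∈ Σ^ℓ whose bd-anchor equals j is the same; equivalently, for every j ∈ [1,ℓ], ℓ·|{X ∈ Σ^ℓ : X primitive and the bd-anchor of X is j}| = |{X ∈ Σ^ℓ : X primitive}|. In particular, for a string drawn uniformly at random from Σ^ℓ and any set S ⊆ [1,ℓ], the probability that the string is primitive with bd-anchor in S is at most |S|/ℓ. -/
import Mathlib


open scoped Classical
set_option linter.unusedSectionVars false

variable {α : Type*} [LinearOrder α]

/-- The rotation of `W` starting at the 1-based position `j`. -/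
def rot (W : List α) (j : ℕ) : List α := W.drop (j - 1) ++ W.take (j - 1)

/-- The fragment `T[i..i+ℓ-1]` (1-based position `i`, length `ℓ`). -/
def frag (T : List α) (i ℓ : ℕ) : List α := (T.drop (i - 1)).take ℓ

/-- The `m`-fold concatenation `U^m`. -/
def listPow (U : List α) (m : ℕ) : List α := (List.replicate m U).flatten

/-- A nonempty string is primitive if it is not a power `U^m` with `m ≥ 2`. -/
def Primitive (X : List α) : Prop :=
  X ≠ [] ∧ ∀ (U : List α) (m : ℕ), 2 ≤ m → X ≠ listPow U m

/-- `j ∈ [1,|X|]` is a position at which a lexicographically minimal rotation of `X` starts. -/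
def IsMinRotPos (X : List α) (j : ℕ) : Prop :=
  j ∈ Finset.Icc 1 X.length ∧ ∀ k ∈ Finset.Icc 1 X.length, rot X j ≤ rot X k

/-- `j` is the bd-anchor of `X`: the smallest position of a lexicographically minimal rotation. -/
def IsBdAnchor (X : List α) (j : ℕ) : Prop :=
  IsMinRotPos X j ∧ ∀ k, IsMinRotPos X k → j ≤ k

/-- The set `A_ℓ(T)` of order-`ℓ` bd-anchors of `T` (1-based absolute positions). -/
def bdAnchors (ℓ : ℕ) (T : List α) : Set ℕ :=
  { p | ∃ i ∈ Finset.Icc 1 (T.length - ℓ + 1), ∃ j, IsBdAnchor (frag T i ℓ) j ∧ p = i - 1 + j }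


lemma listPow_succ (U : List α) (m : ℕ) : listPow U (m+1) = U ++ listPow U m := by
  simp [listPow, List.replicate_succ]

lemma listPow_length (U : List α) (m : ℕ) : (listPow U m).length = m * U.length := by
  induction m with
  | zero => simp [listPow]
  | succ m ih => simp [listPow_succ, ih]; ring

lemma listPow_append_singleton (a : α) (U : List α) (m : ℕ) :
    listPow (a :: U) m ++ [a] = a :: listPow (U ++ [a]) m := by
  induction m with
  | zero => simp [listPow]
  | succ m ih =>
    rw [listPow_succ, listPow_succ]
    simp only [List.cons_append, List.append_assoc, ih]
    simp

lemma listPow_rotate_one (a : α) (U : List α) (m : ℕ) :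
    (listPow (a :: U) m).rotate 1 = listPow (U ++ [a]) m := by
  cases m with
  | zero => simp [listPow]
  | succ m =>
    rw [listPow_succ, listPow_succ]
    have : ((a :: U) ++ listPow (a :: U) m).rotate 1
        = (U ++ listPow (a :: U) m) ++ [a] := by
      simp [List.rotate_cons_succ]
    rw [this, List.append_assoc, listPow_append_singleton]
    simp

lemma exists_pow_rotate_one {L : List α} (h : ∃ U m, 2 ≤ m ∧ L = listPow U m) :
    ∃ U m, 2 ≤ m ∧ L.rotate 1 = listPow U m := by
  obtain ⟨U, m, hm, rfl⟩ := h
  cases U with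
  | nil =>
    refine ⟨[], m, hm, ?_⟩
    have : listPow ([] : List α) m = [] := by simp [listPow]
    simp [this]
  | cons a U => exact ⟨U ++ [a], m, hm, listPow_rotate_one a U m⟩

lemma exists_pow_rotate {L : List α} (h : ∃ U m, 2 ≤ m ∧ L = listPow U m) (n : ℕ) :
    ∃ U m, 2 ≤ m ∧ L.rotate n = listPow U m := by
  induction n with
  | zero => simpa using h
  | succ n ih =>
    have := exists_pow_rotate_one ih
    rwa [List.rotate_rotate] at this

lemma rotate_fix_mul {L : List α} {a : ℕ} (h : L.rotate a = L) (k : ℕ) :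
    L.rotate (k * a) = L := by
  induction k with
  | zero => simp
  | succ k ih =>
    have : L.rotate (k * a + a) = L := by
      rw [← List.rotate_rotate, ih, h]
    simpa [Nat.succ_mul] using this

lemma rotate_fix_sub {L : List α} {a b : ℕ} (hab : a ≤ b)
    (ha : L.rotate a = L) (hb : L.rotate b = L) : L.rotate (b - a) = L := by
  have : (L.rotate a).rotate (b - a) = L.rotate b := by
    rw [List.rotate_rotate]; congr 1; omega
  rw [ha, hb] at this; exact this

lemma rotate_fix_gcd {L : List α} : ∀ a b : ℕ, L.rotate a = L → L.rotate b = L →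
    L.rotate (Nat.gcd a b) = L := by
  intro a
  induction a using Nat.strong_induction_on with
  | _ a ih =>
    intro b ha hb
    rcases Nat.eq_zero_or_pos a with rfl | hpos
    · simpa [Nat.gcd_zero_left] using hb
    · rw [Nat.gcd_rec]
      refine ih (b % a) (Nat.mod_lt _ hpos) a ?_ ha
      have hmul : L.rotate (b / a * a) = L := rotate_fix_mul ha _
      have hmd : b % a + b / a * a = b := Nat.mod_add_div' b a
      have : b % a = b - b / a * a := by omega
      rw [this]
      exact rotate_fix_sub (Nat.div_mul_le_self b a) hmul hb

lemma getElem_listPow {U : List α} (hU : U ≠ []) :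
    ∀ (m i : ℕ) (h : i < (listPow U m).length),
      (listPow U m)[i] = U[i % U.length]'(Nat.mod_lt _ (List.length_pos_iff.mpr hU)) := by
  intro m
  induction m with
  | zero => intro i h; simp [listPow] at h
  | succ m ih =>
    intro i h
    simp only [listPow_succ] at h ⊢
    rcases lt_or_ge i U.length with hi | hi
    · rw [List.getElem_append_left hi]
      congr 1
      exact (Nat.mod_eq_of_lt hi).symm
    · rw [List.getElem_append_right hi]
      rw [ih (i - U.length) (by simp at h ⊢; omega)]
      congr 1
      conv_rhs => rw [show i = (i - U.length) + U.length by omega]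
      rw [Nat.add_mod_right]

lemma exists_pow_of_rotate_fix {L : List α} {r : ℕ} (hr0 : 0 < r) (hrl : r < L.length)
    (h : L.rotate r = L) : ∃ U m, 2 ≤ m ∧ L = listPow U m := by
  have hlen : L.rotate L.length = L := List.rotate_length L
  have hg : L.rotate (Nat.gcd r L.length) = L := rotate_fix_gcd r L.length h hlen
  obtain ⟨g, hgdef⟩ : ∃ g, g = Nat.gcd r L.length := ⟨_, rfl⟩
  rw [← hgdef] at hg
  have hgdvd : g ∣ L.length := hgdef ▸ Nat.gcd_dvd_right r L.length
  have hgr : g ≤ r := Nat.le_of_dvd hr0 (hgdef ▸ Nat.gcd_dvd_left r L.length)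
  have hg0 : 0 < g := hgdef ▸ Nat.gcd_pos_of_pos_left _ hr0
  obtain ⟨m, hmdef⟩ : ∃ m, m = L.length / g := ⟨_, rfl⟩
  have hml : m * g = L.length := hmdef ▸ Nat.div_mul_cancel hgdvd
  have hm2 : 2 ≤ m := by
    by_contra hc
    push_neg at hc
    have : m * g ≤ 1 * g := Nat.mul_le_mul_right g (by omega)
    omega
  refine ⟨L.take g, m, hm2, ?_⟩
  have htl : (L.take g).length = g := by
    rw [List.length_take]; omega
  have hne : L.take g ≠ [] := by
    intro hc
    have := congrArg List.length hc
    simp [htl] at this; omega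
  have hstep : ∀ i (hi : i + g < L.length), L[i + g]'hi
      = L[i]'(Nat.lt_of_le_of_lt (Nat.le_add_right i g) hi) := by
    intro i hi
    have h2 := List.getElem_rotate L g i
      (by simpa using Nat.lt_of_le_of_lt (Nat.le_add_right i g) hi)
    have h2' : L[i]'(Nat.lt_of_le_of_lt (Nat.le_add_right i g) hi)
        = L[(i + g) % L.length]'(by have := Nat.mod_lt (i+g) (show 0 < L.length by omega); omega) :=
      (List.getElem_of_eq hg.symm _).trans h2
    rw [h2']
    simp [Nat.mod_eq_of_lt hi]
  have hper : ∀ k i (hik : i + k * g < L.length),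
      L[i + k * g]'hik = L[i]'(Nat.lt_of_le_of_lt (Nat.le_add_right i _) hik) := by
    intro k
    induction k with
    | zero => intro i h; simp
    | succ k ihk =>
      intro i hik
      have h1 : i + (k+1) * g = (i + k * g) + g := by ring
      have h2 : (i + k*g) + g < L.length := by omega
      calc L[i + (k+1)*g]'(by omega) = L[(i + k*g) + g]'(by omega) := by
            simp only [h1]
        _ = L[i + k*g]'(by omega) := hstep _ h2
        _ = L[i]'(by omega) := ihk i (by omega)
  have hper2 : ∀ i (hi : i < L.length),
      L[i] = L[i % g]'(by have := Nat.mod_lt i hg0; omega) := by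
    intro i hi
    have hmd : i % g + i / g * g = i := Nat.mod_add_div' i g
    have := hper (i / g) (i % g) (by omega)
    simp only [hmd] at this
    exact this
  apply List.ext_getElem
  · rw [listPow_length, htl]; omega
  · intro i h1 h2
    rw [getElem_listPow hne]
    simp only [htl, List.getElem_take]
    exact hper2 i h1


lemma primitive_rotate {L : List α} (h : Primitive L) (n : ℕ) : Primitive (L.rotate n) := by
  have hne : L.rotate n ≠ [] := by
    intro hc
    have := congrArg List.length hc
    simp at this
    exact h.1 this
  refine ⟨hne, ?_⟩
  intro U m hm hc
  have hl0 : 0 < L.length := List.length_pos_iff.mpr h.1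
  have hp : ∃ U m, 2 ≤ m ∧ (L.rotate n).rotate (L.length - n % L.length) = listPow U m :=
    exists_pow_rotate ⟨U, m, hm, hc⟩ _
  have hid : (L.rotate n).rotate (L.length - n % L.length) = L := by
    rw [List.rotate_rotate]
    have hmd : n % L.length + n / L.length * L.length = n := Nat.mod_add_div' n L.length
    have hml : n % L.length < L.length := Nat.mod_lt n hl0
    have he : n + (L.length - n % L.length) = (n / L.length + 1) * L.length := by
      rw [Nat.add_mul, Nat.one_mul]; omega
    rw [he]
    exact rotate_fix_mul (List.rotate_length L) _
  rw [hid] at hp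
  obtain ⟨U', m', hm', hc'⟩ := hp
  exact h.2 U' m' hm' hc'

lemma rotate_inj_of_primitive {L : List α} (h : Primitive L) {a b : ℕ}
    (ha : a < L.length) (hb : b < L.length) (heq : L.rotate a = L.rotate b) : a = b := by
  have key : ∀ a b : ℕ, a < b → b < L.length → L.rotate a = L.rotate b → False := by
    intro a b hab hbl heq
    have hY : Primitive (L.rotate a) := primitive_rotate h a
    have hfix : (L.rotate a).rotate (b - a) = L.rotate a := by
      rw [List.rotate_rotate, show a + (b - a) = b by omega, heq]
    have hlen : (L.rotate a).length = L.length := List.length_rotate L a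
    obtain ⟨U, m, hm, hc⟩ := exists_pow_of_rotate_fix (by omega) (by omega) hfix
    exact hY.2 U m hm hc
  rcases lt_trichotomy a b with hlt | heq' | hgt
  · exact (key a b hlt hb heq).elim
  · exact heq'
  · exact (key b a hgt ha heq.symm).elim

lemma rot_eq_rotate {L : List α} {j : ℕ} (h2 : j ≤ L.length) :
    rot L j = L.rotate (j - 1) :=
  (List.rotate_eq_drop_append_take (by omega)).symm

lemma isMinRotPos_iff {L : List α} {j : ℕ} :
    IsMinRotPos L j ↔ 1 ≤ j ∧ j ≤ L.length ∧
      ∀ r < L.length, L.rotate (j - 1) ≤ L.rotate r := by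
  constructor
  · rintro ⟨hj, hmin⟩
    rw [Finset.mem_Icc] at hj
    refine ⟨hj.1, hj.2, fun r hr => ?_⟩
    have := hmin (r + 1) (Finset.mem_Icc.mpr (by omega))
    rwa [rot_eq_rotate hj.2, rot_eq_rotate (by omega), Nat.add_sub_cancel] at this
  · rintro ⟨h1, h2, hmin⟩
    refine ⟨Finset.mem_Icc.mpr ⟨h1, h2⟩, fun k hk => ?_⟩
    rw [Finset.mem_Icc] at hk
    rw [rot_eq_rotate h2, rot_eq_rotate hk.2]
    exact hmin (k - 1) (by omega)

lemma isBdAnchor_iff_of_primitive {L : List α} (h : Primitive L) {j : ℕ} :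
    IsBdAnchor L j ↔ 1 ≤ j ∧ j ≤ L.length ∧
      ∀ r < L.length, L.rotate (j - 1) ≤ L.rotate r := by
  constructor
  · rintro ⟨hmin, _⟩
    exact isMinRotPos_iff.mp hmin
  · rintro ⟨h1, h2, hmin⟩
    refine ⟨isMinRotPos_iff.mpr ⟨h1, h2, hmin⟩, fun k hkmin => ?_⟩
    obtain ⟨hk1, hk2, hkm⟩ := isMinRotPos_iff.mp hkmin
    have heq : L.rotate (k - 1) = L.rotate (j - 1) :=
      le_antisymm (hkm (j - 1) (by omega)) (hmin (k - 1) (by omega))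
    have := rotate_inj_of_primitive h (a := k - 1) (b := j - 1) (by omega) (by omega) heq
    omega

lemma isBdAnchor_unique {L : List α} {a b : ℕ} (ha : IsBdAnchor L a) (hb : IsBdAnchor L b) :
    a = b :=
  le_antisymm (ha.2 b hb.1) (hb.2 a ha.1)

lemma exists_isBdAnchor {L : List α} (hL : L ≠ []) : ∃ j, IsBdAnchor L j := by
  have hl0 : 0 < L.length := List.length_pos_iff.mpr hL
  have hne : (Finset.Icc 1 L.length).Nonempty := ⟨1, Finset.mem_Icc.mpr (by omega)⟩
  obtain ⟨k, hk, hkmin⟩ := Finset.exists_min_image (Finset.Icc 1 L.length) (rot L) hne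
  have hkpos : IsMinRotPos L k := ⟨hk, hkmin⟩
  have hFne : ((Finset.Icc 1 L.length).filter (IsMinRotPos L)).Nonempty :=
    ⟨k, Finset.mem_filter.mpr ⟨hk, hkpos⟩⟩
  refine ⟨((Finset.Icc 1 L.length).filter (IsMinRotPos L)).min' hFne, ?_, ?_⟩
  · exact (Finset.mem_filter.mp (Finset.min'_mem _ hFne)).2
  · intro k hk
    exact Finset.min'_le _ k (Finset.mem_filter.mpr ⟨hk.1, hk⟩)

lemma anchor_rotate_one {L : List α} (h : Primitive L) {j : ℕ} (hj : IsBdAnchor L j) :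
    IsBdAnchor (L.rotate 1) (if j = 1 then L.length else j - 1) := by
  obtain ⟨h1, h2, hmin⟩ := (isBdAnchor_iff_of_primitive h).mp hj
  have hl0 : 0 < L.length := by omega
  have h' : Primitive (L.rotate 1) := primitive_rotate h 1
  rw [isBdAnchor_iff_of_primitive h']
  rw [List.length_rotate]
  refine ⟨by split <;> omega, by split <;> omega, ?_⟩
  intro r hr
  rw [List.rotate_rotate, List.rotate_rotate]
  have hlhs : L.rotate (1 + ((if j = 1 then L.length else j - 1) - 1)) = L.rotate (j - 1) := by
    split
    · rename_i hj1
      subst hj1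
      simp [show 1 + (L.length - 1) = L.length by omega, List.rotate_length]
    · congr 1; omega
  rw [hlhs, ← List.rotate_mod L (1 + r)]
  exact hmin _ (Nat.mod_lt _ hl0)

lemma ofFn_shift {ℓ : ℕ} [NeZero ℓ] (X : Fin ℓ → α) :
    List.ofFn (fun i => X (i + 1)) = (List.ofFn X).rotate 1 := by
  apply List.ext_getElem
  · simp
  · intro i h1 h2
    simp only [List.getElem_ofFn, List.getElem_rotate, List.length_ofFn]
    congr 1
    apply Fin.ext
    simp only [Fin.add_def, Fin.val_one']
    simp only [List.length_ofFn] at h1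
    simp [Fin.val_cast_of_lt, Nat.add_mod_mod]


/-- For each `j ∈ [1,ℓ]`, the number of primitive strings in `Σ^ℓ` with
bd-anchor `j` is the same, namely `(1/ℓ)`-th of the number of primitive strings in `Σ^ℓ`;
in particular, for a uniformly random string of `Σ^ℓ` and any `S ⊆ [1,ℓ]`, the probability
of being primitive with bd-anchor in `S` is at most `|S|/ℓ`. -/
theorem primitive_bd_anchor_equidistributed [Fintype α] (σ ℓ : ℕ)
    (hσ : Fintype.card α = σ) (hℓ : 1 ≤ ℓ) :
    (∀ j ∈ Finset.Icc 1 ℓ,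
        ℓ * {X : Fin ℓ → α |
              Primitive (List.ofFn X) ∧ IsBdAnchor (List.ofFn X) j}.ncard =
          {X : Fin ℓ → α | Primitive (List.ofFn X)}.ncard) ∧
      ∀ S : Finset ℕ, S ⊆ Finset.Icc 1 ℓ →
        ({X : Fin ℓ → α |
            Primitive (List.ofFn X) ∧ ∃ j ∈ S, IsBdAnchor (List.ofFn X) j}.ncard : ℝ) /
            (σ : ℝ) ^ ℓ ≤
          (S.card : ℝ) / (ℓ : ℝ) := by
  haveI : NeZero ℓ := ⟨by omega⟩
  -- the rotation map on functions
  set ρ : (Fin ℓ → α) → (Fin ℓ → α) := fun X i => X (i + 1) with hρ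
  have hρinj : Function.Injective ρ := by
    intro X Y hXY
    funext i
    have := congrFun hXY (i - 1)
    simpa [hρ, sub_add_cancel] using this
  have hlen : ∀ X : Fin ℓ → α, (List.ofFn X).length = ℓ := by simp
  have hofρ : ∀ X : Fin ℓ → α, List.ofFn (ρ X) = (List.ofFn X).rotate 1 := fun X =>
    ofFn_shift X
  -- the anchor-indexed sets
  set A : ℕ → Set (Fin ℓ → α) := fun j =>
    {X | Primitive (List.ofFn X) ∧ IsBdAnchor (List.ofFn X) j} with hA
  set prev : ℕ → ℕ := fun j => if j = 1 then ℓ else j - 1 with hprev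
  have hprevmem : ∀ j, 1 ≤ j → j ≤ ℓ → 1 ≤ prev j ∧ prev j ≤ ℓ := by
    intro j h1 h2; simp only [hprev]; split <;> omega
  have hprevinj : ∀ a b, 1 ≤ a → a ≤ ℓ → 1 ≤ b → b ≤ ℓ → prev a = prev b → a = b := by
    intro a b ha1 ha2 hb1 hb2 h
    simp only [hprev] at h
    split at h <;> split at h <;> omega
  -- the key bijection
  have hbij : ∀ j, 1 ≤ j → j ≤ ℓ → Set.BijOn ρ (A j) (A (prev j)) := by
    intro j h1 h2
    refine ⟨?_, hρinj.injOn, ?_⟩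
    · rintro X ⟨hp, ha⟩
      have hp' : Primitive (List.ofFn (ρ X)) := by
        rw [hofρ]; exact primitive_rotate hp 1
      have ha' : IsBdAnchor (List.ofFn (ρ X)) (prev j) := by
        rw [hofρ]
        have := anchor_rotate_one hp ha
        rwa [hlen] at this
      exact ⟨hp', ha'⟩
    · rintro Y ⟨hp, ha⟩
      refine ⟨fun i => Y (i - 1), ?_, ?_⟩
      · -- membership in A j
        have hYX : ρ (fun i => Y (i - 1)) = Y := by
          funext i; simp [hρ, add_sub_cancel_right]
        set X : Fin ℓ → α := fun i => Y (i - 1) with hX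
        have hof : List.ofFn Y = (List.ofFn X).rotate 1 := by
          rw [← hofρ, hYX]
        have hpX : Primitive (List.ofFn X) := by
          constructor
          · intro hc
            have := congrArg List.length hc
            rw [hlen] at this; simp at this; omega
          · intro U m hm hc
            obtain ⟨U', m', hm', hc'⟩ := exists_pow_rotate_one ⟨U, m, hm, hc⟩
            rw [← hof] at hc'
            exact hp.2 U' m' hm' hc'
        obtain ⟨j'', ha''⟩ := exists_isBdAnchor hpX.1
        have hj'' := (isBdAnchor_iff_of_primitive hpX).mp ha''
        rw [hlen] at hj''
        have haY : IsBdAnchor (List.ofFn Y) (prev j'') := by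
          rw [hof]
          have := anchor_rotate_one hpX ha''
          rwa [hlen] at this
        have : prev j'' = prev j := isBdAnchor_unique haY ha
        have : j'' = j := hprevinj _ _ hj''.1 hj''.2.1 h1 h2 this
        exact ⟨hpX, this ▸ ha''⟩
      · funext i; simp [hρ, add_sub_cancel_right]
  -- all counts are equal
  have hAfin : ∀ j, (A j).Finite := fun j => Set.toFinite _
  have hcard : ∀ j, 1 ≤ j → j ≤ ℓ → (A (prev j)).ncard = (A j).ncard := by
    intro j h1 h2
    rw [← (hbij j h1 h2).image_eq, Set.ncard_image_of_injective _ hρinj]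
  have hconst : ∀ j, 1 ≤ j → j ≤ ℓ → (A j).ncard = (A 1).ncard := by
    intro j
    induction j with
    | zero => omega
    | succ j ih =>
      intro h1 h2
      rcases Nat.eq_zero_or_pos j with rfl | hj
      · rfl
      · have := hcard (j + 1) (by omega) h2
        simp only [hprev] at this
        rw [if_neg (by omega)] at this
        simp only [Nat.add_sub_cancel] at this
        rw [← this]
        exact ih (by omega) (by omega)
  -- Finset bookkeeping
  set anch : (Fin ℓ → α) → ℕ := fun X =>
    if h : ∃ j, IsBdAnchor (List.ofFn X) j then h.choose else 0 with hanchdef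
  have hanchspec : ∀ X : Fin ℓ → α, Primitive (List.ofFn X) →
      IsBdAnchor (List.ofFn X) (anch X) := by
    intro X hp
    have h : ∃ j, IsBdAnchor (List.ofFn X) j := exists_isBdAnchor hp.1
    simp only [hanchdef, dif_pos h]
    exact h.choose_spec
  have hanchIcc : ∀ X : Fin ℓ → α, Primitive (List.ofFn X) →
      anch X ∈ Finset.Icc 1 ℓ := by
    intro X hp
    have := (isBdAnchor_iff_of_primitive hp).mp (hanchspec X hp)
    rw [hlen] at this
    exact Finset.mem_Icc.mpr ⟨this.1, this.2.1⟩
  set Pf : Finset (Fin ℓ → α) :=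
    Finset.univ.filter fun X => Primitive (List.ofFn X) with hPf
  set Af : ℕ → Finset (Fin ℓ → α) := fun j => Finset.univ.filter fun X =>
    Primitive (List.ofFn X) ∧ IsBdAnchor (List.ofFn X) j with hAf
  have hAcoe : ∀ j, A j = ↑(Af j) := by
    intro j; ext X; simp [hA, hAf]
  have hfiber : ∀ j, Pf.filter (fun X => anch X = j) = Af j := by
    intro j
    ext X
    simp only [hPf, hAf, Finset.mem_filter, Finset.mem_univ, true_and]
    constructor
    · rintro ⟨hp, h⟩; exact ⟨hp, h ▸ hanchspec X hp⟩
    · rintro ⟨hp, h⟩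
      exact ⟨hp, isBdAnchor_unique (hanchspec X hp) h⟩
  have hsum : Pf.card = ∑ j ∈ Finset.Icc 1 ℓ, (Af j).card := by
    rw [Finset.card_eq_sum_card_fiberwise (f := anch) (t := Finset.Icc 1 ℓ)
      (fun X hX => hanchIcc X (Finset.mem_filter.mp hX).2)]
    exact Finset.sum_congr rfl fun j _ => by rw [hfiber]
  have hc1 : ∀ j, 1 ≤ j → j ≤ ℓ → (Af j).card = (Af 1).card := by
    intro j h1 h2
    have := hconst j h1 h2
    rwa [hAcoe j, hAcoe 1, Set.ncard_coe_finset, Set.ncard_coe_finset] at this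
  have hPsum : Pf.card = ℓ * (Af 1).card := by
    rw [hsum, Finset.sum_congr rfl
      (fun j hj => hc1 j (Finset.mem_Icc.mp hj).1 (Finset.mem_Icc.mp hj).2),
      Finset.sum_const, smul_eq_mul, Nat.card_Icc]
    congr 1
  have hPcoe : {X : Fin ℓ → α | Primitive (List.ofFn X)} = ↑Pf := by
    ext X; simp [hPf]
  constructor
  · intro j hj
    rw [Finset.mem_Icc] at hj
    show ℓ * (A j).ncard = _
    rw [hAcoe j, Set.ncard_coe_finset, hc1 j hj.1 hj.2, hPcoe, Set.ncard_coe_finset, hPsum]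
  · intro S hS
    set Bf : Finset (Fin ℓ → α) := Finset.univ.filter (fun X =>
      Primitive (List.ofFn X) ∧ ∃ j ∈ S, IsBdAnchor (List.ofFn X) j) with hBf
    have hBcoe : {X : Fin ℓ → α |
        Primitive (List.ofFn X) ∧ ∃ j ∈ S, IsBdAnchor (List.ofFn X) j} = ↑Bf := by
      ext X; simp [hBf]
    have hBsum : Bf.card = ∑ j ∈ S, (Bf.filter (fun X => anch X = j)).card := by
      apply Finset.card_eq_sum_card_fiberwise
      intro X hX
      obtain ⟨hp, j', hj'S, hj'⟩ := (Finset.mem_filter.mp hX).2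
      have : anch X = j' := isBdAnchor_unique (hanchspec X hp) hj'
      rw [this]; exact hj'S
    have hBfiber : ∀ j ∈ S, (Bf.filter (fun X => anch X = j)).card = (Af 1).card := by
      intro j hjS
      have hjIcc := Finset.mem_Icc.mp (hS hjS)
      have : Bf.filter (fun X => anch X = j) = Af j := by
        ext X
        simp only [hBf, hAf, Finset.mem_filter, Finset.mem_univ, true_and]
        constructor
        · rintro ⟨⟨hp, _⟩, h⟩
          exact ⟨hp, h ▸ hanchspec X hp⟩
        · rintro ⟨hp, h⟩
          exact ⟨⟨hp, j, hjS, h⟩, isBdAnchor_unique (hanchspec X hp) h⟩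
      rw [this]
      exact hc1 j hjIcc.1 hjIcc.2
    have hB : Bf.card = S.card * (Af 1).card := by
      rw [hBsum, Finset.sum_congr rfl hBfiber, Finset.sum_const, smul_eq_mul]
    have hPle : Pf.card ≤ σ ^ ℓ := by
      calc Pf.card ≤ Finset.univ.card := Finset.card_filter_le _ _
        _ = σ ^ ℓ := by rw [Finset.card_univ, Fintype.card_fun]; simp [hσ]
    rw [hBcoe, Set.ncard_coe_finset, hB]
    rcases Nat.eq_zero_or_pos (σ ^ ℓ) with hz | hpos
    · have hz' : (σ : ℝ) ^ ℓ = 0 := by exact_mod_cast hz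
      rw [hz', div_zero]
      positivity
    · have hposR : (0:ℝ) < (σ:ℝ) ^ ℓ := by exact_mod_cast hpos
      rw [div_le_div_iff₀ hposR (by exact_mod_cast hℓ)]
      have hnat : S.card * (Af 1).card * ℓ ≤ S.card * σ ^ ℓ := by
        calc S.card * (Af 1).card * ℓ = S.card * (ℓ * (Af 1).card) := by ring
          _ = S.card * Pf.card := by rw [hPsum]
          _ ≤ S.card * σ ^ ℓ := Nat.mul_le_mul_left _ hPle
      exact_mod_cast hnat
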